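/- For every integer n ≥ 1 and every b ∈ ℝ^n, the determinant of the n×n matrix whose (i,j) entry is sinh((2(n−i)+1)·b_j), for i, j = 1,…,n, equals 2^{n(n−1)} · (∏_{j=1}^n sinh(b_j)) · ∏_{1 ≤ j < k ≤ n} (sinh²(b_j) − sinh²(b_k)). -/
import Mathlib

open Polynomial in
/-- The Chebyshev-like polynomials: `sinh((2m+1)x) = sinh x * (gQ m).eval (sinh x ^ 2)`. -/
noncomputable def gQ : ℕ → Polynomial ℝ
  | 0 => 1
  | 1 => C 4 * X + C 3
  | (m + 2) => (C 4 * X + C 2) * gQ (m + 1) - gQ m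

open Polynomial

lemma gQ_natDegree_le : ∀ m, (gQ m).natDegree ≤ m := by
  have key : ∀ m, (gQ m).natDegree ≤ m ∧ (gQ (m+1)).natDegree ≤ m + 1 := by
    intro m
    induction m with
    | zero =>
      constructor
      · simp [gQ]
      · simp only [gQ]; exact natDegree_linear_le
    | succ k ih =>
      refine ⟨ih.2, ?_⟩
      show ((C 4 * X + C 2) * gQ (k + 1) - gQ k).natDegree ≤ k + 2
      refine le_trans (natDegree_sub_le _ _) (max_le ?_ (le_trans ih.1 (by omega)))
      refine le_trans (natDegree_mul_le) ?_
      have h1 : (C (4:ℝ) * X + C 2).natDegree ≤ 1 := natDegree_linear_le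
      omega
  exact fun m => (key m).1

lemma gQ_coeff : ∀ m, (gQ m).coeff m = 4 ^ m := by
  have key : ∀ m, (gQ m).coeff m = 4 ^ m ∧ (gQ (m+1)).coeff (m+1) = 4 ^ (m+1) := by
    intro m
    induction m with
    | zero =>
      constructor
      · simp [gQ]
      · simp [gQ, coeff_add, coeff_C_mul, coeff_X, coeff_C]
    | succ k ih =>
      refine ⟨ih.2, ?_⟩
      show (((C 4 * X + C 2) * gQ (k + 1) - gQ k)).coeff (k+2) = (4:ℝ) ^ (k + 2)
      have h0 : (gQ k).coeff (k + 2) = 0 :=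
        coeff_eq_zero_of_natDegree_lt (lt_of_le_of_lt (gQ_natDegree_le k) (by omega))
      have h1 : (gQ (k+1)).coeff (k + 2) = 0 :=
        coeff_eq_zero_of_natDegree_lt (lt_of_le_of_lt (gQ_natDegree_le (k+1)) (by omega))
      have h2 : (X * gQ (k+1)).coeff (k + 2) = (gQ (k+1)).coeff (k+1) := coeff_X_mul _ _
      have e : (C (4:ℝ) * X + C 2) * gQ (k + 1) = C 4 * (X * gQ (k+1)) + C 2 * gQ (k+1) := by
        ring
      rw [coeff_sub, e, coeff_add, coeff_C_mul, coeff_C_mul, h0, h1, h2, ih.2]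
      ring
  exact fun m => (key m).1

lemma gQ_sinh (m : ℕ) (x : ℝ) :
    Real.sinh ((2 * m + 1 : ℕ) * x) = Real.sinh x * (gQ m).eval (Real.sinh x ^ 2) := by
  have hrec : ∀ A y : ℝ, Real.sinh (A + y) = 2 * Real.sinh A * Real.cosh y - Real.sinh (A - y) := by
    intro A y; rw [Real.sinh_add, Real.sinh_sub]; ring
  have key : ∀ m : ℕ, Real.sinh ((2 * m + 1 : ℕ) * x) = Real.sinh x * (gQ m).eval (Real.sinh x ^ 2) ∧
      Real.sinh ((2 * (m+1) + 1 : ℕ) * x) = Real.sinh x * (gQ (m+1)).eval (Real.sinh x ^ 2) := by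
    intro m
    induction m with
    | zero =>
      constructor
      · norm_num [gQ]
      · -- sinh (3x)
        have : ((2 * 1 + 1 : ℕ) : ℝ) * x = (2 * x + x) := by push_cast; ring
        rw [this, Real.sinh_add, Real.sinh_two_mul, Real.cosh_two_mul]
        have hc : Real.cosh x ^ 2 = Real.sinh x ^ 2 + 1 := Real.cosh_sq x
        simp only [gQ]
        simp only [eval_add, eval_mul, eval_C, eval_X]
        linear_combination (3 * Real.sinh x) * hc
    | succ k ih =>
      refine ⟨ih.2, ?_⟩
      have e1 : ((2 * (k+2) + 1 : ℕ) : ℝ) * x = ((2*(k+1)+1 : ℕ) : ℝ) * x + 2 * x := by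
        push_cast; ring
      have e2 : ((2*(k+1)+1 : ℕ) : ℝ) * x - 2 * x = ((2*k+1 : ℕ) : ℝ) * x := by
        push_cast; ring
      rw [e1, hrec, e2, ih.1, ih.2, Real.cosh_two_mul]
      have hc : Real.cosh x ^ 2 = Real.sinh x ^ 2 + 1 := Real.cosh_sq x
      show _ = Real.sinh x * (((C 4 * X + C 2) * gQ (k + 1) - gQ k)).eval (Real.sinh x ^ 2)
      simp only [eval_sub, eval_add, eval_mul, eval_C, eval_X]
      linear_combination (2 * Real.sinh x * eval (Real.sinh x ^ 2) (gQ (k+1))) * hc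
  exact (key m).1

lemma det_eval_poly {n : ℕ} (v : Fin n → ℝ) (p : Fin n → ℝ[X])
    (hdeg : ∀ i, (p i).natDegree ≤ i) :
    (Matrix.of fun i j => (p j).eval (v i)).det =
      (∏ i, (p i).coeff i) * (Matrix.vandermonde v).det := by
  rw [Matrix.eval_matrixOfPolynomials_eq_vandermonde_mul_matrixOfPolynomials v p hdeg,
    Matrix.det_mul,
    Matrix.det_of_upperTriangular (Matrix.matrixOfPolynomials_blockTriangular p hdeg),
    mul_comm]
  rfl

lemma prod_Ioi_rev {n : ℕ} (f : Fin n → Fin n → ℝ) :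
    (∏ i, ∏ j ∈ Finset.Ioi i, f (Fin.rev j) (Fin.rev i)) = ∏ i, ∏ j ∈ Finset.Ioi i, f i j := by
  rw [Finset.prod_sigma', Finset.prod_sigma']
  refine Finset.prod_nbij' (fun p => ⟨Fin.rev p.2, Fin.rev p.1⟩)
    (fun p => ⟨Fin.rev p.2, Fin.rev p.1⟩) ?_ ?_ ?_ ?_ ?_
  · intro a ha
    simp only [Finset.mem_sigma, Finset.mem_univ, Finset.mem_Ioi, true_and] at ha ⊢
    exact Fin.rev_lt_rev.mpr ha
  · intro a ha
    simp only [Finset.mem_sigma, Finset.mem_univ, Finset.mem_Ioi, true_and] at ha ⊢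
    exact Fin.rev_lt_rev.mpr ha
  · intro a _; simp [Fin.rev_rev]
  · intro a _; simp [Fin.rev_rev]
  · intro a _; rfl

lemma prod_four_pow (n : ℕ) : (∏ i : Fin n, (4:ℝ) ^ (i:ℕ)) = 2 ^ (n * (n-1)) := by
  rw [Finset.prod_pow_eq_pow_sum]
  have h : (∑ i : Fin n, (i:ℕ)) * 2 = n * (n - 1) := by
    rw [Fin.sum_univ_eq_sum_range (fun i => i) n]
    exact Finset.sum_range_id_mul_two n
  calc (4:ℝ) ^ (∑ i : Fin n, (i:ℕ)) = ((2:ℝ)^2) ^ (∑ i : Fin n, (i:ℕ)) := by norm_num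
    _ = 2 ^ (2 * ∑ i : Fin n, (i:ℕ)) := (pow_mul 2 2 _).symm
    _ = 2 ^ ((∑ i : Fin n, (i:ℕ)) * 2) := by rw [mul_comm]
    _ = 2 ^ (n * (n-1)) := by rw [h]

/-- Grabiner's determinant identity: the determinant of the `n × n` matrix with entries
`sinh((2(n-i)+1) bⱼ)` (rows indexed by the decreasing odd integers `2n-1, 2n-3, …, 1`;
with `0`-based row index `i : Fin n` the coefficient is `2(n-1-i)+1`) equals
`2^(n(n-1)) ∏ⱼ sinh(bⱼ) ∏_{j<k} (sinh²(bⱼ) - sinh²(b_k))`. -/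
theorem stmt5 (n : ℕ) (hn : 1 ≤ n) (b : Fin n → ℝ) :
    Matrix.det (Matrix.of fun i j : Fin n =>
        Real.sinh (((2 * (n - 1 - (i : ℕ)) + 1 : ℕ) : ℝ) * b j)) =
      2 ^ (n * (n - 1)) * (∏ j, Real.sinh (b j)) *
        ∏ j, ∏ k ∈ Finset.Ioi j, (Real.sinh (b j) ^ 2 - Real.sinh (b k) ^ 2) := by
  set B : Matrix (Fin n) (Fin n) ℝ :=
    Matrix.of (fun i j : Fin n =>
      (gQ ((Fin.rev i : Fin n) : ℕ)).eval (Real.sinh (b j) ^ 2)) with hBdef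
  have hA : (Matrix.of fun i j : Fin n =>
        Real.sinh (((2 * (n - 1 - (i : ℕ)) + 1 : ℕ) : ℝ) * b j)) =
      Matrix.of (fun i j => Real.sinh (b j) * B i j) := by
    ext i j
    rw [hBdef, Matrix.of_apply, Matrix.of_apply, Matrix.of_apply, ← gQ_sinh]
    congr 3
    rw [Fin.val_rev]
    omega
  rw [hA, Matrix.det_mul_row]
  set C : Matrix (Fin n) (Fin n) ℝ :=
    Matrix.of (fun i j : Fin n => (gQ (j:ℕ)).eval (Real.sinh (b (Fin.rev i)) ^ 2)) with hC
  have hB : B = (Matrix.transpose C).submatrix (Fin.revPerm : Equiv.Perm (Fin n))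
      (Fin.revPerm : Equiv.Perm (Fin n)) := by
    ext i j
    simp [hBdef, hC, Matrix.submatrix, Matrix.transpose, Fin.rev_rev]
  rw [hB, Matrix.det_submatrix_equiv_self, Matrix.det_transpose, hC,
    det_eval_poly _ _ (fun i => gQ_natDegree_le (i:ℕ))]
  have hcf : (∏ i : Fin n, (gQ (i:ℕ)).coeff (i:ℕ)) = 2 ^ (n * (n-1)) := by
    rw [← prod_four_pow n]
    exact Finset.prod_congr rfl fun i _ => gQ_coeff (i:ℕ)
  rw [Matrix.det_vandermonde, hcf]
  have hprod : (∏ i : Fin n, ∏ j ∈ Finset.Ioi i,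
      (Real.sinh (b (Fin.rev j)) ^ 2 - Real.sinh (b (Fin.rev i)) ^ 2)) =
      ∏ j, ∏ k ∈ Finset.Ioi j, (Real.sinh (b j) ^ 2 - Real.sinh (b k) ^ 2) :=
    prod_Ioi_rev (fun i j => Real.sinh (b i) ^ 2 - Real.sinh (b j) ^ 2)
  rw [hprod]
  ring
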